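/- arXiv:1901.10511 — 6 statements merged into one kernel-verified Lean document; each statement's English description precedes it below -/
import Mathlib

section
/- Let p₁,…,p_t be distinct primes each at least 5, and set h = (1/2)·gcd(p₁−1,…,p_t−1,24). Then h is a positive integer, and for an integer k, there exist integers v and (r_δ) for each divisor δ ≠ 1 of N = p₁⋯p_t satisfying 2k = 24v − ∑_{δ|N, δ≠1}(δ−1)·r_δ if and only if h divides k. -/
/-!
Let `d = gcd(p₁ - 1, …, p_t - 1, 24) = 2h`. The integers `24v - ∑ (δ - 1) r_δ` form the ideal
generated by `24` and the `δ - 1`. Every divisor `δ` of `N` is a product of some of the `pᵢ`, so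
`δ ≡ 1 (mod d)` and the ideal lies in `dℤ`; conversely it contains `24` and each `pᵢ - 1`, so by
Bézout it contains `d`. Hence `2k` is of this form iff `2h ∣ 2k`, i.e. iff `h ∣ k`.
-/

theorem Finset.natCast_gcd {α : Type*} (s : Finset α) (f : α → ℕ) :
    ((s.gcd f : ℕ) : ℤ) = s.gcd fun a => (f a : ℤ) := by
  classical
  induction s using Finset.induction with
  | empty => simp
  | insert a s ha ih =>
    rw [gcd_insert, gcd_insert, ← ih]
    exact (Int.coe_gcd (f a) (s.gcd f : ℕ)).symm

theorem Nat.modEq_one_of_dvd_prod_of_prime {S : Finset ℕ} {m : ℕ} (hS : ∀ p ∈ S, p.Prime)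
    (h1 : ∀ p ∈ S, p ≡ 1 [MOD m]) {δ : ℕ} (hδ : δ ∣ ∏ p ∈ S, p) : δ ≡ 1 [MOD m] := by
  classical
  induction S using Finset.induction generalizing δ with
  | empty => simp_all [Nat.ModEq.refl]
  | insert p S hp ih =>
    rw [Finset.prod_insert hp] at hδ
    obtain ⟨a, b, ha, hb, rfl⟩ := exists_dvd_and_dvd_of_dvd_mul hδ
    have ha1 : a ≡ 1 [MOD m] := by
      rcases (hS p (S.mem_insert_self p)).eq_one_or_self_of_dvd a ha with rfl | rfl
      exacts [Nat.ModEq.refl 1, h1 _ (S.mem_insert_self _)]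
    simpa using ha1.mul (ih (fun q hq => hS q (S.mem_insert_of_mem hq))
      (fun q hq => h1 q (S.mem_insert_of_mem hq)) hb)

theorem two_dvd_gcd_sub_one {S : Finset ℕ} (hS : ∀ p ∈ S, p.Prime ∧ p ≠ 2) :
    2 ∣ S.gcd (· - 1) :=
  Finset.dvd_gcd fun p hp =>
    (Nat.Odd.sub_odd ((hS p hp).1.odd_of_ne_two (hS p hp).2) odd_one).two_dvd

theorem exists_eq_mul_sub_sum_divisors_iff {S : Finset ℕ} (hS : ∀ p ∈ S, p.Prime) (m : ℕ)
    (x : ℤ) :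
    (∃ v : ℤ, ∃ r : ℕ → ℤ,
        x = m * v - ∑ δ ∈ (∏ p ∈ S, p).divisors.erase 1, ((δ : ℤ) - 1) * r δ) ↔
      ((Nat.gcd (S.gcd (· - 1)) m : ℕ) : ℤ) ∣ x := by
  classical
  set g := S.gcd (· - 1)
  constructor
  · rintro ⟨v, r, rfl⟩
    have hp : ∀ p ∈ S, p ≡ 1 [MOD g.gcd m] := fun p hp =>
      ((Nat.modEq_iff_dvd' (hS p hp).one_le).2
        ((Nat.gcd_dvd_left g m).trans (Finset.gcd_dvd hp))).symm
    have hδ : ∀ δ ∈ (∏ p ∈ S, p).divisors.erase 1, ((g.gcd m : ℕ) : ℤ) ∣ δ - 1 := fun δ hδ =>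
      Nat.modEq_iff_dvd.1 (Nat.modEq_one_of_dvd_prod_of_prime hS hp
        (Nat.dvd_of_mem_divisors (Finset.mem_of_mem_erase hδ))).symm
    exact dvd_sub ((Int.natCast_dvd_natCast.2 (Nat.gcd_dvd_right g m)).mul_right v)
      (Finset.dvd_sum fun δ hδ' => (hδ δ hδ').mul_right _)
  · rintro ⟨y, rfl⟩
    obtain ⟨c, hc⟩ := S.gcd_eq_sum_mul fun p => ((p - 1 : ℕ) : ℤ)
    rw [← Finset.natCast_gcd] at hc
    have hS_sub : S ⊆ (∏ p ∈ S, p).divisors.erase 1 := fun p hp =>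
      Finset.mem_erase.2 ⟨(hS p hp).ne_one, Nat.mem_divisors.2 ⟨Finset.dvd_prod_of_mem _ hp,
        Finset.prod_ne_zero_iff.2 fun q hq => (hS q hq).ne_zero⟩⟩
    refine ⟨g.gcdB m * y, fun δ => if δ ∈ S then -(g.gcdA m * y * c δ) else 0, ?_⟩
    have hsum : ∑ p ∈ S, ((p : ℤ) - 1) * -(g.gcdA m * y * c p)
        = -(g.gcdA m * y) * ∑ p ∈ S, ((p - 1 : ℕ) : ℤ) * c p := by
      rw [Finset.mul_sum]
      exact Finset.sum_congr rfl fun p hp => by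
        rw [Nat.cast_sub (hS p hp).one_le, Nat.cast_one]; ring
    simp only [mul_ite, mul_zero]
    rw [Finset.sum_ite_mem, Finset.inter_eq_right.2 hS_sub, hsum, ← hc, Nat.gcd_eq_gcd_ab]
    ring

theorem stmt_5 (S : Finset ℕ) (hS : ∀ p ∈ S, Nat.Prime p ∧ 5 ≤ p)
    (N : ℕ) (hN : N = ∏ p ∈ S, p) (h : ℕ)
    (hh : h = Nat.gcd (S.gcd (fun p => p - 1)) 24 / 2) (k : ℤ) :
    0 < h ∧
      ((∃ v : ℤ, ∃ r : ℕ → ℤ,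
          2 * k = 24 * v - ∑ δ ∈ N.divisors.erase 1, ((δ : ℤ) - 1) * r δ) ↔
        (h : ℤ) ∣ k) := by
  have h2 : 2 ∣ Nat.gcd (S.gcd (· - 1)) 24 :=
    Nat.dvd_gcd (two_dvd_gcd_sub_one fun p hp => ⟨(hS p hp).1, by linarith [(hS p hp).2]⟩)
      (by norm_num)
  have hd : Nat.gcd (S.gcd (· - 1)) 24 = 2 * h := by rw [hh, Nat.mul_div_cancel' h2]
  have hd_pos : 0 < Nat.gcd (S.gcd (· - 1)) 24 := Nat.gcd_pos_of_pos_right _ (by norm_num)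
  refine ⟨by omega, ?_⟩
  have key := exists_eq_mul_sub_sum_divisors_iff (fun p hp => (hS p hp).1) 24 (2 * k)
  rw [hd, ← hN] at key
  push_cast at key
  rw [key, mul_dvd_mul_iff_left two_ne_zero]
end

section
/- Let N be a squarefree positive integer and δ a positive divisor of N. Then ∑_{d | N} N·gcd(d,δ)²/(d·δ) = σ₁(N), where σ₁(N) is the sum of positive divisors of N. -/
/-!
Squarefreeness makes `N = δ * m` with `δ` and `m` coprime, so every divisor `d` of `N` is
`a * b` with `a = gcd d δ` and `b = gcd d m`, and its summand is `N a² / (a b δ) = a * (m / b)`.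
The map `a * b ↦ a * (m / b)` is an involution of the divisors of `N`, so the summands are
the divisors of `N` in another order.
-/

namespace Nat

def swapCofactor (δ m d : ℕ) : ℕ := gcd d δ * (m / gcd d m)

variable {δ m : ℕ}

theorem swapCofactor_dvd_mul (d : ℕ) : swapCofactor δ m d ∣ δ * m :=
  mul_dvd_mul (gcd_dvd_right d δ) (div_dvd_of_dvd (gcd_dvd_right d m))

theorem gcd_swapCofactor_left (hco : Coprime δ m) (d : ℕ) :
    gcd (swapCofactor δ m d) δ = gcd d δ := by
  have : Coprime (m / gcd d m) δ :=
    hco.symm.coprime_dvd_left (div_dvd_of_dvd (gcd_dvd_right d m))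
  rw [swapCofactor, this.gcd_mul_right_cancel, gcd_eq_left (gcd_dvd_right d δ)]

theorem gcd_swapCofactor_right (hco : Coprime δ m) (d : ℕ) :
    gcd (swapCofactor δ m d) m = m / gcd d m := by
  rw [swapCofactor, (hco.coprime_dvd_left (gcd_dvd_right d δ)).gcd_mul_left_cancel,
    gcd_eq_left (div_dvd_of_dvd (gcd_dvd_right d m))]

theorem swapCofactor_swapCofactor (hco : Coprime δ m) (hm : m ≠ 0) {d : ℕ} (hd : d ∣ δ * m) :
    swapCofactor δ m (swapCofactor δ m d) = d := by
  rw [swapCofactor, gcd_swapCofactor_left hco, gcd_swapCofactor_right hco,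
    Nat.div_div_self (gcd_dvd_right d m) hm, (gcd_mul_gcd_eq_iff_dvd_mul_of_coprime hco).mpr hd]

theorem mul_gcd_sq_div_eq_swapCofactor {K : Type*} [Field K] [CharZero K] (hco : Coprime δ m)
    (hδm : δ * m ≠ 0) {d : ℕ} (hd : d ∣ δ * m) :
    ((δ * m : ℕ) * gcd d δ ^ 2 : K) / (d * δ) = swapCofactor δ m d := by
  have hδ : δ ≠ 0 := left_ne_zero_of_mul hδm
  nth_rw 2 [← (gcd_mul_gcd_eq_iff_dvd_mul_of_coprime hco).mpr hd]
  rw [swapCofactor]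
  push_cast [cast_div_charZero (gcd_dvd_right d m)]
  field_simp

theorem sum_divisors_mul_gcd_sq_div {K : Type*} [Field K] [CharZero K] (hco : Coprime δ m) :
    ∑ d ∈ (δ * m).divisors, ((δ * m : ℕ) * gcd d δ ^ 2 : K) / (d * δ)
      = ∑ d ∈ (δ * m).divisors, (d : K) := by
  by_cases hδm : δ * m = 0
  · simp [hδm]
  have hm : m ≠ 0 := right_ne_zero_of_mul hδm
  have hmem : ∀ d, swapCofactor δ m d ∈ (δ * m).divisors := fun d =>
    mem_divisors.mpr ⟨swapCofactor_dvd_mul d, hδm⟩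
  refine Finset.sum_nbij' (swapCofactor δ m) (swapCofactor δ m) (fun d _ => hmem d)
    (fun d _ => hmem d) (fun d hd => swapCofactor_swapCofactor hco hm (dvd_of_mem_divisors hd))
    (fun d hd => swapCofactor_swapCofactor hco hm (dvd_of_mem_divisors hd))
    (fun d hd => mul_gcd_sq_div_eq_swapCofactor hco hδm (dvd_of_mem_divisors hd))

end Nat

theorem stmt_6_general (N : ℕ) (hsq : Squarefree N) (δ : ℕ) (hδ : δ ∣ N) :
    (∑ d ∈ N.divisors, (N * Nat.gcd d δ ^ 2 : ℚ) / (d * δ))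
      = (∑ d ∈ N.divisors, d : ℚ) := by
  obtain ⟨m, rfl⟩ := hδ
  exact Nat.sum_divisors_mul_gcd_sq_div (Nat.coprime_of_squarefree_mul hsq)

theorem stmt_6 (N : ℕ) (hN : 0 < N) (hsq : Squarefree N) (δ : ℕ) (hδ : δ ∣ N) :
    (∑ d ∈ N.divisors, (N * Nat.gcd d δ ^ 2 : ℚ) / (d * δ))
      = (∑ d ∈ N.divisors, d : ℚ) :=
  stmt_6_general N hsq δ hδ
end

section
/- Let N be a squarefree positive integer and δ a positive divisor of N. Then the map d ↦ N·gcd(d,δ)²/(d·δ) is a bijection from the set of positive divisors of N to itself. -/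
theorem stmt_7 (N : ℕ) (hN : 0 < N) (hsq : Squarefree N) (δ : ℕ) (hδ : δ ∣ N) :
    Set.BijOn (fun d => N * Nat.gcd d δ ^ 2 / (d * δ))
      (N.divisors : Set ℕ) (N.divisors : Set ℕ) := by
  have key : ∀ d ∈ (N.divisors : Set ℕ),
      (N * Nat.gcd d δ ^ 2 / (d * δ)) ∈ (N.divisors : Set ℕ) ∧
      N * Nat.gcd (N * Nat.gcd d δ ^ 2 / (d * δ)) δ ^ 2 /
        ((N * Nat.gcd d δ ^ 2 / (d * δ)) * δ) = d := by
    intro d hd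
    simp only [Finset.coe_sort_coe, Finset.mem_coe, Nat.mem_divisors] at hd ⊢
    obtain ⟨hdN, _⟩ := hd
    have hδ0 : 0 < δ := Nat.pos_of_dvd_of_pos hδ hN
    have hd0 : 0 < d := Nat.pos_of_dvd_of_pos hdN hN
    set g := Nat.gcd d δ with hg
    have hg0 : 0 < g := Nat.gcd_pos_of_pos_left δ hd0
    obtain ⟨d', hd'⟩ : g ∣ d := Nat.gcd_dvd_left d δ
    obtain ⟨δ', hδ'⟩ : g ∣ δ := Nat.gcd_dvd_right d δ
    obtain ⟨m, hm⟩ : Nat.lcm d δ ∣ N := Nat.lcm_dvd hdN hδ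
    have hlcm : Nat.lcm d δ = g * d' * δ' := by
      have h1 : g * Nat.lcm d δ = g * (g * d' * δ') :=
        calc g * Nat.lcm d δ = d * δ := Nat.gcd_mul_lcm d δ
          _ = g * (g * d' * δ') := by rw [hd', hδ']; ring
      exact Nat.eq_of_mul_eq_mul_left hg0 h1
    have hN' : N = g * d' * δ' * m := by rw [hm, hlcm]
    have hm0 : 0 < m := by
      rcases Nat.eq_zero_or_pos m with h | h
      · exfalso; rw [h, mul_zero] at hN'; omega
      · exact h
    have coprime_lcm_m : Nat.Coprime (Nat.lcm d δ) m :=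
      (Nat.squarefree_mul_iff.mp (hm ▸ hsq)).1
    have cop_m_δ' : Nat.Coprime m δ' :=
      (Nat.Coprime.coprime_dvd_left (by rw [hlcm]; exact dvd_mul_left _ _)
        coprime_lcm_m).symm
    have hfd : N * g ^ 2 / (d * δ) = m * g := by
      have h2 : N * g ^ 2 = (d * δ) * (m * g) := by
        rw [hN', hd', hδ']; ring
      rw [h2, Nat.mul_div_cancel_left _ (by positivity)]
    have hgcd2 : Nat.gcd (m * g) δ = g := by
      rw [hδ', mul_comm m g, Nat.gcd_mul_left, cop_m_δ', mul_one]
    refine ⟨⟨?_, hN.ne'⟩, ?_⟩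
    · rw [hfd]
      exact ⟨d' * δ', by rw [hN']; ring⟩
    · rw [hfd, hgcd2]
      have h3 : N * g ^ 2 = (m * g * δ) * d := by
        rw [hN', hd', hδ']; ring
      rw [h3, Nat.mul_div_cancel_left _ (by positivity)]
  exact Set.InvOn.bijOn ⟨fun d hd => (key d hd).2, fun d hd => (key d hd).2⟩
    (fun d hd => (key d hd).1) (fun d hd => (key d hd).1)
end

section
/- Let N be a squarefree positive integer and δ, d' positive divisors of N. Setting d = gcd(d',δ)·gcd(N/d', N/δ), we have that d divides N and N·gcd(d,δ)²/(d·δ) = d'. -/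
theorem stmt_8 (N : ℕ) (hN : 0 < N) (hsq : Squarefree N)
    (δ d' : ℕ) (hδ : δ ∣ N) (hd' : d' ∣ N)
    (d : ℕ) (hd : d = Nat.gcd d' δ * Nat.gcd (N / d') (N / δ)) :
    d ∣ N ∧ N * Nat.gcd d δ ^ 2 = d' * (d * δ) := by
  have hδ0 : 0 < δ := Nat.pos_of_dvd_of_pos hδ hN
  have hd'0 : 0 < d' := Nat.pos_of_dvd_of_pos hd' hN
  set g := Nat.gcd d' δ with hg
  have hg0 : 0 < g := Nat.gcd_pos_of_pos_left _ hd'0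
  set a := d' / g with haa
  set b := δ / g with hbb
  have ha : d' = g * a := (Nat.mul_div_cancel' (Nat.gcd_dvd_left d' δ)).symm
  have hb : δ = g * b := (Nat.mul_div_cancel' (Nat.gcd_dvd_right d' δ)).symm
  have hab : Nat.Coprime a b := Nat.coprime_div_gcd_div_gcd hg0
  have hlcmdvd : Nat.lcm d' δ ∣ N := Nat.lcm_dvd hd' hδ
  set c := N / Nat.lcm d' δ with hcc
  have hNlcm : N = Nat.lcm d' δ * c := (Nat.mul_div_cancel' hlcmdvd).symm
  have hlcm : Nat.lcm d' δ = g * a * b := by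
    have h1 : g * Nat.lcm d' δ = g * (g * a * b) := by
      rw [Nat.gcd_mul_lcm d' δ, ha, hb]; ring
    exact Nat.eq_of_mul_eq_mul_left hg0 h1
  have hNeq : N = g * a * b * c := by rw [hNlcm, hlcm]
  have hNd' : N / d' = b * c := by
    rw [ha, hNeq]
    rw [show g * a * b * c = g * a * (b * c) by ring]
    exact Nat.mul_div_cancel_left _ (ha ▸ hd'0)
  have hNδ : N / δ = a * c := by
    rw [hb, hNeq]
    rw [show g * a * b * c = g * b * (a * c) by ring]
    exact Nat.mul_div_cancel_left _ (hb ▸ hδ0)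
  have hgcd2 : Nat.gcd (N / d') (N / δ) = c := by
    rw [hNd', hNδ, Nat.gcd_mul_right, Nat.Coprime.gcd_eq_one hab.symm, one_mul]
  have hdgc : d = g * c := by rw [hd, hgcd2]
  have hbc : Nat.Coprime b c := by
    have hdvd : b * c ∣ N := ⟨g * a, by rw [hNeq]; ring⟩
    have := hsq.squarefree_of_dvd hdvd
    exact (Nat.squarefree_mul_iff.mp this).1
  have hgcd3 : Nat.gcd d δ = g := by
    rw [hdgc, hb, Nat.gcd_mul_left, Nat.Coprime.gcd_eq_one hbc.symm, mul_one]
  constructor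
  · exact ⟨a * b, by rw [hdgc, hNeq]; ring⟩
  · rw [hgcd3, hdgc, ha, hb, hNeq]; ring
end

section
/- Let N be a squarefree positive integer, δ a positive divisor of N, and d₁, d₂ positive divisors of N such that d₂·gcd(d₁,δ)² = d₁·gcd(d₂,δ)². Then d₁ = d₂. -/
theorem stmt_9 (N : ℕ) (hN : 0 < N) (hsq : Squarefree N)
    (δ d₁ d₂ : ℕ) (hδ : δ ∣ N) (h₁ : d₁ ∣ N) (h₂ : d₂ ∣ N)
    (h : d₂ * Nat.gcd d₁ δ ^ 2 = d₁ * Nat.gcd d₂ δ ^ 2) :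
    d₁ = d₂ := by
  have hδ0 : δ ≠ 0 := (Nat.pos_of_dvd_of_pos hδ hN).ne'
  have h10 : d₁ ≠ 0 := (Nat.pos_of_dvd_of_pos h₁ hN).ne'
  have h20 : d₂ ≠ 0 := (Nat.pos_of_dvd_of_pos h₂ hN).ne'
  refine Nat.eq_of_factorization_eq h10 h20 fun p => ?_
  have hg1 : Nat.gcd d₁ δ ≠ 0 := Nat.gcd_ne_zero_left h10
  have hg2 : Nat.gcd d₂ δ ≠ 0 := Nat.gcd_ne_zero_left h20
  have hf := congrArg (fun n => n.factorization p) h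
  simp only [Nat.factorization_mul h20 (pow_ne_zero 2 hg1),
    Nat.factorization_mul h10 (pow_ne_zero 2 hg2),
    Nat.factorization_pow, Nat.factorization_gcd h10 hδ0,
    Nat.factorization_gcd h20 hδ0, Finsupp.add_apply, Finsupp.smul_apply,
    Finsupp.inf_apply, smul_eq_mul] at hf
  have b1 : d₁.factorization p ≤ 1 := (hsq.squarefree_of_dvd h₁).natFactorization_le_one p
  have b2 : d₂.factorization p ≤ 1 := (hsq.squarefree_of_dvd h₂).natFactorization_le_one p
  have bδ : δ.factorization p ≤ 1 := (hsq.squarefree_of_dvd hδ).natFactorization_le_one p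
  omega
end

section
/- Let p₁,…,p_t be distinct primes, each ≥ 5, N = p₁⋯p_t, h = (1/2)·gcd(p₁−1,…,p_t−1,24), and k an even integer with h | k. Then 12 divides k·σ₁(N), where σ₁(N) = ∏_{i=1}^t (p_i+1). -/
theorem stmt_18 (S : Finset ℕ) (hS : ∀ p ∈ S, Nat.Prime p ∧ 5 ≤ p)
    (h : ℕ) (hh : h = Nat.gcd (S.gcd (fun p => p - 1)) 24 / 2)
    (k : ℤ) (hk : Even k) (hhk : (h : ℤ) ∣ k) :
    (12 : ℤ) ∣ k * ∏ p ∈ S, ((p : ℤ) + 1) := by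
  rcases S.eq_empty_or_nonempty with rfl | ⟨q, hq⟩
  · simp only [Finset.gcd_empty, Nat.gcd_zero_left] at hh
    norm_num at hh
    subst hh
    simpa using hhk
  · have h4 : (4 : ℤ) ∣ k * ∏ p ∈ S, ((p : ℤ) + 1) := by
      obtain ⟨m, hm⟩ := hk
      have hqodd : ¬ (2 ∣ q) := by
        intro hd
        have := (Nat.prime_dvd_prime_iff_eq (by norm_num) (hS q hq).1).mp hd
        have := (hS q hq).2
        omega
      obtain ⟨r, hr⟩ : (2 : ℕ) ∣ q + 1 := by omega
      have h2q : (2 : ℤ) ∣ (q : ℤ) + 1 := ⟨r, by exact_mod_cast hr⟩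
      obtain ⟨n, hn⟩ := h2q.trans (Finset.dvd_prod_of_mem (fun p : ℕ => (p : ℤ) + 1) hq)
      exact ⟨m * n, by rw [hm, hn]; ring⟩
    have h3 : (3 : ℤ) ∣ k * ∏ p ∈ S, ((p : ℤ) + 1) := by
      by_cases hc : ∃ p ∈ S, p % 3 = 2
      · obtain ⟨p, hpS, hp3⟩ := hc
        obtain ⟨r, hr⟩ : (3 : ℕ) ∣ p + 1 := by omega
        have h3p : (3 : ℤ) ∣ (p : ℤ) + 1 := ⟨r, by exact_mod_cast hr⟩
        exact (h3p.trans (Finset.dvd_prod_of_mem (fun p : ℕ => (p : ℤ) + 1) hpS)).mul_left k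
      · push_neg at hc
        have hg3 : 3 ∣ S.gcd (fun p => p - 1) := Finset.dvd_gcd fun p hp => by
          have h5 := (hS p hp).2
          have hnd : ¬ (3 ∣ p) := by
            intro hd
            have := (Nat.prime_dvd_prime_iff_eq (by norm_num) (hS p hp).1).mp hd
            omega
          have := hc p hp
          omega
        have hg2 : 2 ∣ S.gcd (fun p => p - 1) := Finset.dvd_gcd fun p hp => by
          have h5 := (hS p hp).2
          have hnd : ¬ (2 ∣ p) := by
            intro hd
            have := (Nat.prime_dvd_prime_iff_eq (by norm_num) (hS p hp).1).mp hd
            omega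
          omega
        have h6 : 6 ∣ Nat.gcd (S.gcd (fun p => p - 1)) 24 :=
          Nat.dvd_gcd (Nat.Coprime.mul_dvd_of_dvd_of_dvd (by norm_num) hg2 hg3) (by norm_num)
        have h3h : (3 : ℕ) ∣ h := by omega
        have : (3 : ℤ) ∣ k := dvd_trans (by exact_mod_cast h3h) hhk
        exact this.mul_right _
    have hcop : IsCoprime (4 : ℤ) 3 := by
      rw [Int.isCoprime_iff_gcd_eq_one]; decide
    have := hcop.mul_dvd h4 h3
    norm_num at this
    exact this
end
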